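/- arXiv:1707.01681 — 2 statements merged into one kernel-verified Lean document; each statement's English description precedes it below -/
import Mathlib

section
/- There exists ε > 0 such that for all real u, v, w with 0 < u < ε, 0 < v < ε and 0 < w < ε, the quartic t⁴ − (1+u+2v+2w)·t³ + (2uw+(v+w)²)·t² + (w²(1−u)+2vw)·t + w² = 0 has a real root t > 1; i.e., in the positive-parameter vicinity of the origin of the (u,v,w) space a physical bound state emerges from below the continuum. -/
/-! The secular quartic is negative at `t = 1` for small positive couplings and positive at
`t = 2`, so the intermediate value theorem gives a root in `(1, 2)`. -/

open Set

def secularQuartic (u v w t : ℝ) : ℝ :=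
  t ^ 4 - (1 + u + 2 * v + 2 * w) * t ^ 3
    + (2 * u * w + (v + w) ^ 2) * t ^ 2
    + (w ^ 2 * (1 - u) + 2 * v * w) * t + w ^ 2

lemma continuous_secularQuartic (u v w : ℝ) : Continuous (secularQuartic u v w) := by
  unfold secularQuartic
  fun_prop

lemma secularQuartic_one (u v w : ℝ) :
    secularQuartic u v w 1 = -(u * (1 - w) ^ 2) - v * (2 - v - 4 * w) - w * (2 - 3 * w) := by
  unfold secularQuartic
  ring

lemma secularQuartic_two (u v w : ℝ) :
    secularQuartic u v w 2 =
      8 * (1 - u - 2 * v - 2 * w) + 2 * u * w * (4 - w) + 4 * (v + w) ^ 2 + 4 * v * w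
        + 3 * w ^ 2 := by
  unfold secularQuartic
  ring

lemma secularQuartic_one_neg {u v w : ℝ} (hu : 0 < u) (hv₀ : 0 ≤ v) (hv : v ≤ 1 / 3)
    (hw₀ : 0 ≤ w) (hw : w ≤ 1 / 3) : secularQuartic u v w 1 < 0 := by
  have hu' : 0 < u * (1 - w) ^ 2 := by positivity [show (0 : ℝ) < 1 - w by linarith]
  have hv' : 0 ≤ v * (2 - v - 4 * w) := mul_nonneg hv₀ (by linarith)
  have hw' : 0 ≤ w * (2 - 3 * w) := mul_nonneg hw₀ (by linarith)
  rw [secularQuartic_one]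
  linarith

lemma secularQuartic_two_pos {u v w : ℝ} (hu : 0 ≤ u) (hv : 0 ≤ v) (hw : 0 ≤ w)
    (hsum : u + 2 * v + 2 * w < 1) : 0 < secularQuartic u v w 2 := by
  have huw : 0 ≤ 2 * u * w * (4 - w) := mul_nonneg (by positivity) (by linarith)
  rw [secularQuartic_two]
  nlinarith [sq_nonneg (v + w), mul_nonneg hv hw, sq_nonneg w]

lemma exists_secularQuartic_eq_zero {u v w : ℝ} (hu : 0 < u) (hv₀ : 0 ≤ v) (hv : v ≤ 1 / 3)
    (hw₀ : 0 ≤ w) (hw : w ≤ 1 / 3) (hsum : u + 2 * v + 2 * w < 1) :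
    ∃ t ∈ Ioo (1 : ℝ) 2, secularQuartic u v w t = 0 :=
  intermediate_value_Ioo (by norm_num) (continuous_secularQuartic u v w).continuousOn
    ⟨secularQuartic_one_neg hu hv₀ hv hw₀ hw, secularQuartic_two_pos hu.le hv₀ hw₀ hsum⟩

/-- Near the origin of the positive parameter octant `0 < u, v, w < ε`, the
`J = 3` secular quartic has a real root `t > 1`: a bound state emerges from
below the continuum. -/
theorem J3_bound_state_emerges :
    ∃ ε > (0 : ℝ), ∀ u v w : ℝ,
      0 < u → u < ε → 0 < v → v < ε → 0 < w → w < ε →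
      ∃ t : ℝ, 1 < t ∧
        t ^ 4 - (1 + u + 2 * v + 2 * w) * t ^ 3
            + (2 * u * w + (v + w) ^ 2) * t ^ 2
            + (w ^ 2 * (1 - u) + 2 * v * w) * t + w ^ 2 = 0 := by
  refine ⟨1 / 5, by norm_num, fun u v w hu hu' hv hv' hw hw' => ?_⟩
  obtain ⟨t, ht, hroot⟩ :=
    exists_secularQuartic_eq_zero hu hv.le (by linarith) hw.le (by linarith) (by linarith)
  exact ⟨t, ht.1, hroot⟩
end

section
/- For all real t, u, v, w, y the polynomial identity t⁶ + (−1−2w−2y−u−2v)·t⁵ + (2wy+4vy+2uw+v²+2uy+w²+2vw+y²)·t⁴ + (−y²u+y²−2wvy−w²u−2wuy+2uy+2wy−2y²v−2v²y+2vy+2vw+w²)·t³ + (2wy+y²+y²v²−2wvy−2wuy−2y²u+w²+2vy−2y²v)·t² + (−2y²v+2wy−y²u+y²)·t + y² = L(t)² − t·(1+u)·R(t)² holds, where L(t) = t³ − (v+w+y)·t² + (vy−y−w)·t − y and R(t) = t² − (w+y)·t − y. Consequently the J = 4 secular equation is equivalent (for t ≥ 0) to L(t) = ±R(t)·√(t(1+u)).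 -/
/-! The sextic is the norm `L² - q R²` of `L + R √q` with `q = t(1+u)`; when `q ≥ 0` it vanishes
exactly when `L = ±R √q`. -/

namespace J4Secular

def sextic (t u v w y : ℝ) : ℝ :=
  t ^ 6 + (-1 - 2 * w - 2 * y - u - 2 * v) * t ^ 5
    + (2 * w * y + 4 * v * y + 2 * u * w + v ^ 2 + 2 * u * y + w ^ 2
        + 2 * v * w + y ^ 2) * t ^ 4
    + (-(y ^ 2) * u + y ^ 2 - 2 * w * v * y - w ^ 2 * u - 2 * w * u * y
        + 2 * u * y + 2 * w * y - 2 * y ^ 2 * v - 2 * v ^ 2 * y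
        + 2 * v * y + 2 * v * w + w ^ 2) * t ^ 3
    + (2 * w * y + y ^ 2 + y ^ 2 * v ^ 2 - 2 * w * v * y - 2 * w * u * y
        - 2 * y ^ 2 * u + w ^ 2 + 2 * v * y - 2 * y ^ 2 * v) * t ^ 2
    + (-2 * y ^ 2 * v + 2 * w * y - y ^ 2 * u + y ^ 2) * t + y ^ 2

def cubicL (t v w y : ℝ) : ℝ := t ^ 3 - (v + w + y) * t ^ 2 + (v * y - y - w) * t - y

def quadraticR (t w y : ℝ) : ℝ := t ^ 2 - (w + y) * t - y

theorem sextic_eq_sq_sub_mul_sq (t u v w y : ℝ) :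
    sextic t u v w y = cubicL t v w y ^ 2 - t * (1 + u) * quadraticR t w y ^ 2 := by
  unfold sextic cubicL quadraticR
  ring

end J4Secular

theorem Real.sq_sub_mul_sq_eq_zero_iff {a b q : ℝ} (hq : 0 ≤ q) :
    a ^ 2 - q * b ^ 2 = 0 ↔ a = b * √q ∨ a = -(b * √q) := by
  have hsq : q * b ^ 2 = (b * √q) ^ 2 := by rw [mul_pow, Real.sq_sqrt hq, mul_comm]
  rw [sub_eq_zero, hsq, sq_eq_sq_iff_eq_or_eq_neg]

open J4Secular in
/-- The `J = 4` secular sextic factorizes as `L(t)² - t(1+u) R(t)²` with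
`L(t) = t³ - (v+w+y) t² + (vy-y-w) t - y` and `R(t) = t² - (w+y) t - y`;
consequently, for `t ≥ 0` (with the square root real, i.e. `t(1+u) ≥ 0`) the
secular equation is equivalent to `L(t) = ±R(t)√(t(1+u))`. -/
theorem J4_secular_factorization :
    (∀ t u v w y : ℝ,
      t ^ 6 + (-1 - 2 * w - 2 * y - u - 2 * v) * t ^ 5
          + (2 * w * y + 4 * v * y + 2 * u * w + v ^ 2 + 2 * u * y + w ^ 2
              + 2 * v * w + y ^ 2) * t ^ 4
          + (-(y ^ 2) * u + y ^ 2 - 2 * w * v * y - w ^ 2 * u - 2 * w * u * y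
              + 2 * u * y + 2 * w * y - 2 * y ^ 2 * v - 2 * v ^ 2 * y
              + 2 * v * y + 2 * v * w + w ^ 2) * t ^ 3
          + (2 * w * y + y ^ 2 + y ^ 2 * v ^ 2 - 2 * w * v * y - 2 * w * u * y
              - 2 * y ^ 2 * u + w ^ 2 + 2 * v * y - 2 * y ^ 2 * v) * t ^ 2
          + (-2 * y ^ 2 * v + 2 * w * y - y ^ 2 * u + y ^ 2) * t + y ^ 2 =
        (t ^ 3 - (v + w + y) * t ^ 2 + (v * y - y - w) * t - y) ^ 2
          - t * (1 + u) * (t ^ 2 - (w + y) * t - y) ^ 2) ∧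
    (∀ t u v w y : ℝ, 0 ≤ t → 0 ≤ t * (1 + u) →
      (t ^ 6 + (-1 - 2 * w - 2 * y - u - 2 * v) * t ^ 5
          + (2 * w * y + 4 * v * y + 2 * u * w + v ^ 2 + 2 * u * y + w ^ 2
              + 2 * v * w + y ^ 2) * t ^ 4
          + (-(y ^ 2) * u + y ^ 2 - 2 * w * v * y - w ^ 2 * u - 2 * w * u * y
              + 2 * u * y + 2 * w * y - 2 * y ^ 2 * v - 2 * v ^ 2 * y
              + 2 * v * y + 2 * v * w + w ^ 2) * t ^ 3
          + (2 * w * y + y ^ 2 + y ^ 2 * v ^ 2 - 2 * w * v * y - 2 * w * u * y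
              - 2 * y ^ 2 * u + w ^ 2 + 2 * v * y - 2 * y ^ 2 * v) * t ^ 2
          + (-2 * y ^ 2 * v + 2 * w * y - y ^ 2 * u + y ^ 2) * t + y ^ 2 = 0 ↔
        (t ^ 3 - (v + w + y) * t ^ 2 + (v * y - y - w) * t - y =
            (t ^ 2 - (w + y) * t - y) * Real.sqrt (t * (1 + u)) ∨
         t ^ 3 - (v + w + y) * t ^ 2 + (v * y - y - w) * t - y =
            -((t ^ 2 - (w + y) * t - y) * Real.sqrt (t * (1 + u)))))) := by
  refine ⟨sextic_eq_sq_sub_mul_sq, fun t u v w y _ hq => ?_⟩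
  change sextic t u v w y = 0 ↔ _
  rw [sextic_eq_sq_sub_mul_sq]
  exact Real.sq_sub_mul_sq_eq_zero_iff hq
end
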